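/- With (W_n) and Π_∞ as above, the limit Π_∞ has empty boundary (every (d−2)-facet lies in an even number of its plaquettes) and has no finite connected components in the plaquette adjacency graph. -/

import Mathlib

open Set Relation Filter

/-- Vertices of the lattice `ℤ^d`. -/
abbrev V (d : ℕ) := Fin d → ℤ

/-- Nearest-neighbour adjacency in `ℤ^d`: `x` and `y` differ by `1` in exactly
one coordinate. -/
def latAdj {d : ℕ} (x y : V d) : Prop :=
  ∃ i, (x i - y i).natAbs = 1 ∧ ∀ j, j ≠ i → x j = y j

/-- Connectivity in the complement of `S` (paths avoiding `S`). -/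
def connAvoid {d : ℕ} (S : Set (V d)) (a b : V d) : Prop :=
  ReflTransGen (fun u v => latAdj u v ∧ u ∉ S ∧ v ∉ S) a b

/-- The connected component of `w` in the complement of `S`. -/
def compOff {d : ℕ} (S : Set (V d)) (w : V d) : Set (V d) :=
  {z | connAvoid S w z}

/-- `y` lies outside `S` and is joined to infinity off `S` (its component in
the complement of `S` is infinite). -/
def toInfOff {d : ℕ} (S : Set (V d)) (y : V d) : Prop :=
  y ∉ S ∧ (compOff S y).Infinite

/-- `S ⊆ ℤ^d` is connected (as an induced subgraph of the lattice). -/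
def IsLatConnected {d : ℕ} (S : Set (V d)) : Prop :=
  ∀ a ∈ S, ∀ b ∈ S, ReflTransGen (fun u v => latAdj u v ∧ u ∈ S ∧ v ∈ S) a b

/-- `S` together with all its holes (the finite components of its complement). -/
def fillHoles {d : ℕ} (S : Set (V d)) : Set (V d) :=
  S ∪ {w | w ∉ S ∧ (compOff S w).Finite}

/-- We identify a plaquette with its dual edge, realized as an unordered pair of
adjacent lattice points.  `PiS S` is the set of plaquettes dual to edges
`⟨x,y⟩` with `x ∈ S` and `y ∉ S` joined to infinity off `S`. -/
def PiS {d : ℕ} (S : Set (V d)) : Set (Sym2 (V d)) :=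
  {e | ∃ x y, latAdj x y ∧ x ∈ S ∧ toInfOff S y ∧ e = s(x, y)}

/-- The `i`-th unit coordinate vector. -/
def uv {d : ℕ} (i : Fin d) : V d := fun k => if k = i then 1 else 0

/-- A unit square (2-facet) of `ℤ^d`; its dual is a `(d-2)`-facet of the dual
lattice `ℤ^d + (1/2,…,1/2)`. -/
structure Square (d : ℕ) where
  corner : V d
  i : Fin d
  j : Fin d
  hij : i ≠ j

/-- The four edges of a unit square.  A plaquette (identified with its dual
edge `e`) is incident to the `(d-2)`-facet dual to the square `F` exactly when
`e` is one of the four edges of `F`. -/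
def edgesOf {d : ℕ} (F : Square d) : Set (Sym2 (V d)) :=
  {s(F.corner, F.corner + uv F.i), s(F.corner, F.corner + uv F.j),
   s(F.corner + uv F.i, F.corner + uv F.i + uv F.j),
   s(F.corner + uv F.j, F.corner + uv F.i + uv F.j)}

/-- A set of plaquettes has empty boundary if every `(d-2)`-facet of the dual
lattice is incident to an even number of its members. -/
def NoBoundary {d : ℕ} (P : Set (Sym2 (V d))) : Prop :=
  ∀ F : Square d, Even (edgesOf F ∩ P).ncard

/-- Two plaquettes are adjacent if their intersection is a `(d-2)`-facet,
equivalently their dual edges are distinct edges of a common unit square. -/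
def plaqAdj {d : ℕ} (e₁ e₂ : Sym2 (V d)) : Prop :=
  e₁ ≠ e₂ ∧ ∃ F : Square d, e₁ ∈ edgesOf F ∧ e₂ ∈ edgesOf F

/-- A set of plaquettes is connected for the adjacency relation `plaqAdj`. -/
def PlaqConnected {d : ℕ} (P : Set (Sym2 (V d))) : Prop :=
  ∀ a ∈ P, ∀ b ∈ P, ReflTransGen (fun u v => plaqAdj u v ∧ u ∈ P ∧ v ∈ P) a b

/-!
Membership of a plaquette in `Π(W n)` is eventually constant, because `{S | e ∈ Π(S)}` is
order-convex; hence `Π_∞` inherits every local property of the `Π(W n)`, in particular the parity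
condition at each `(d-2)`-facet, `Π(S)` being the edge boundary of `S` with its holes filled.

If the component `C` of `π` in `Π_∞` were finite, then for large `n` the component `K` of `π` in
`Π(W n)` would lie in `C`, since the finitely many neighbours of `C` outside `Π_∞` have left
`Π(W n)`. In dimension `d ≥ 2` a finite set of edges without boundary is the edge boundary of a set
inside any box containing it: the points whose ray in a fixed coordinate direction crosses `K` an
odd number of times. That set contains the connected set `W n`, so `|W n|` stays bounded by the
size of a box around `C`, contradicting `|W n| → ∞`.
-/

section Lattice

variable {d : ℕ}

@[simp] lemma uv_apply (i j : Fin d) : uv i j = if j = i then 1 else 0 := rfl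

@[simp] lemma add_nsmul_uv_apply_self (v : V d) (k : ℕ) (i : Fin d) :
    (v + k • uv i) i = v i + k := by
  simp

lemma add_nsmul_uv_apply_of_ne (v : V d) (k : ℕ) {i l : Fin d} (h : l ≠ i) :
    (v + k • uv i) l = v l := by
  simp [h]

lemma latAdj_symm {x y : V d} (h : latAdj x y) : latAdj y x := by
  obtain ⟨i, h1, h2⟩ := h
  exact ⟨i, by rw [← Int.natAbs_neg, neg_sub, h1], fun j hj => (h2 j hj).symm⟩

lemma latAdj_add_uv (x : V d) (i : Fin d) : latAdj x (x + uv i) :=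
  ⟨i, by simp, fun j hj => by simp [hj]⟩

lemma latAdj_iff {x y : V d} : latAdj x y ↔ ∃ i, y = x + uv i ∨ x = y + uv i := by
  constructor
  · rintro ⟨i, h1, h2⟩
    refine ⟨i, ?_⟩
    rcases Int.natAbs_eq_iff.mp h1 with h | h
    · right; funext j; by_cases hj : j = i
      · subst hj; simp only [Pi.add_apply, uv_apply, ↓reduceIte]; omega
      · simp [hj, h2 j hj]
    · left; funext j; by_cases hj : j = i
      · subst hj; simp only [Pi.add_apply, uv_apply, ↓reduceIte]; omega
      · simp [hj, h2 j hj]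
  · rintro ⟨i, rfl | rfl⟩
    exacts [latAdj_add_uv x i, latAdj_symm (latAdj_add_uv y i)]

variable (d) in
def latGraph : SimpleGraph (V d) where
  Adj := latAdj
  symm := ⟨fun _ _ => latAdj_symm⟩
  loopless := ⟨fun x => by rintro ⟨i, h, -⟩; simp at h⟩

end Lattice

namespace Square

variable {d : ℕ} (F : Square d)

lemma edges_pairwise_ne :
    s(F.corner, F.corner + uv F.i) ≠ s(F.corner, F.corner + uv F.j) ∧
    s(F.corner, F.corner + uv F.i) ≠ s(F.corner + uv F.i, F.corner + uv F.i + uv F.j) ∧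
    s(F.corner, F.corner + uv F.i) ≠ s(F.corner + uv F.j, F.corner + uv F.i + uv F.j) ∧
    s(F.corner, F.corner + uv F.j) ≠ s(F.corner + uv F.i, F.corner + uv F.i + uv F.j) ∧
    s(F.corner, F.corner + uv F.j) ≠ s(F.corner + uv F.j, F.corner + uv F.i + uv F.j) ∧
    s(F.corner + uv F.i, F.corner + uv F.i + uv F.j) ≠
      s(F.corner + uv F.j, F.corner + uv F.i + uv F.j) := by
  have hij := F.hij
  refine ⟨?_, ?_, ?_, ?_, ?_, ?_⟩ <;> rw [Ne, Sym2.eq_iff] <;>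
    rintro (⟨h₁, h₂⟩ | ⟨h₁, h₂⟩) <;>
    have := congrFun h₁ F.i <;> have := congrFun h₁ F.j <;>
    have := congrFun h₂ F.i <;> have := congrFun h₂ F.j <;>
    simp [hij, hij.symm] at *

lemma ncard_edgesOf_inter (P : Set (Sym2 (V d))) :
    ((edgesOf F ∩ P).ncard : ZMod 2) =
      P.indicator 1 s(F.corner, F.corner + uv F.i) + P.indicator 1 s(F.corner, F.corner + uv F.j) +
      P.indicator 1 s(F.corner + uv F.i, F.corner + uv F.i + uv F.j) +
      P.indicator 1 s(F.corner + uv F.j, F.corner + uv F.i + uv F.j) := by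
  classical
  obtain ⟨h12, h13, h14, h23, h24, h34⟩ := F.edges_pairwise_ne
  have : edgesOf F ∩ P = ↑(({s(F.corner, F.corner + uv F.i), s(F.corner, F.corner + uv F.j),
      s(F.corner + uv F.i, F.corner + uv F.i + uv F.j),
      s(F.corner + uv F.j, F.corner + uv F.i + uv F.j)} : Finset _).filter (· ∈ P)) := by
    ext; simp only [edgesOf, Finset.coe_filter]; simp
  rw [this, Set.ncard_coe_finset, Finset.natCast_card_filter, Finset.sum_insert (by simp [*]),
    Finset.sum_insert (by simp [*]), Finset.sum_insert (by simp [*]), Finset.sum_singleton]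
  simp only [Set.indicator_apply, Pi.one_apply, add_assoc]

end Square

section Boundary

variable {d : ℕ}

lemma noBoundary_iff {P : Set (Sym2 (V d))} :
    NoBoundary P ↔ ∀ F : Square d,
      P.indicator 1 s(F.corner, F.corner + uv F.i) + P.indicator 1 s(F.corner, F.corner + uv F.j) +
      P.indicator 1 s(F.corner + uv F.i, F.corner + uv F.i + uv F.j) +
      P.indicator 1 s(F.corner + uv F.j, F.corner + uv F.i + uv F.j) = (0 : ZMod 2) := by
  simp only [NoBoundary, ← ZMod.natCast_eq_zero_iff_even, Square.ncard_edgesOf_inter]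

def edgeBoundary (A : Set (V d)) : Set (Sym2 (V d)) :=
  {e | ∃ x y, latAdj x y ∧ x ∈ A ∧ y ∉ A ∧ e = s(x, y)}

lemma mem_edgeBoundary_iff {A : Set (V d)} {x y : V d} (h : latAdj x y) :
    s(x, y) ∈ edgeBoundary A ↔ (x ∈ A ∧ y ∉ A ∨ y ∈ A ∧ x ∉ A) := by
  constructor
  · rintro ⟨u, v, -, hu, hv, he⟩
    rcases Sym2.eq_iff.mp he with ⟨rfl, rfl⟩ | ⟨rfl, rfl⟩
    exacts [Or.inl ⟨hu, hv⟩, Or.inr ⟨hu, hv⟩]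
  · rintro (⟨hx, hy⟩ | ⟨hy, hx⟩)
    exacts [⟨x, y, h, hx, hy, rfl⟩, ⟨y, x, latAdj_symm h, hy, hx, Sym2.eq_swap⟩]

lemma edgeBoundary_subset_edgeSet (A : Set (V d)) : edgeBoundary A ⊆ (latGraph d).edgeSet := by
  rintro _ ⟨x, y, h, -, -, rfl⟩
  exact h

lemma indicator_edgeBoundary {A : Set (V d)} {x y : V d} (h : latAdj x y) :
    (edgeBoundary A).indicator 1 s(x, y) = A.indicator (1 : V d → ZMod 2) x + A.indicator 1 y := by
  by_cases hx : x ∈ A <;> by_cases hy : y ∈ A <;>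
    simp [Set.indicator_of_mem, Set.indicator_of_notMem, mem_edgeBoundary_iff h, hx, hy,
      CharTwo.add_self_eq_zero]

lemma noBoundary_edgeBoundary (A : Set (V d)) : NoBoundary (edgeBoundary A) := by
  refine noBoundary_iff.2 fun F => ?_
  have hsq : latAdj (F.corner + uv F.j) (F.corner + uv F.i + uv F.j) := by
    simpa only [add_right_comm] using latAdj_add_uv (F.corner + uv F.j) F.i
  rw [indicator_edgeBoundary (latAdj_add_uv _ _), indicator_edgeBoundary (latAdj_add_uv _ _),
    indicator_edgeBoundary (latAdj_add_uv _ _), indicator_edgeBoundary hsq]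
  have hcorners_twice : ∀ a b c e : ZMod 2, a + b + (a + c) + (b + e) + (c + e) = 0 := by decide
  exact hcorners_twice _ _ _ _

lemma PiS_subset_edgeBoundary (S : Set (V d)) : PiS S ⊆ edgeBoundary S := by
  rintro _ ⟨x, y, h, hx, hy, rfl⟩
  exact ⟨x, y, h, hx, hy.1, rfl⟩

lemma PiS_eq_edgeBoundary_fillHoles (S : Set (V d)) : PiS S = edgeBoundary (fillHoles S) := by
  ext e
  constructor
  · rintro ⟨x, y, h, hx, ⟨hyS, hyinf⟩, rfl⟩
    exact ⟨x, y, h, Or.inl hx, by rintro (hy | ⟨-, hfin⟩) <;> contradiction, rfl⟩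
  · rintro ⟨x, y, h, hx, hy, rfl⟩
    have hyS : y ∉ S := fun hyS => hy (Or.inl hyS)
    have hyinf : (compOff S y).Infinite := fun hfin => hy (Or.inr ⟨hyS, hfin⟩)
    refine ⟨x, y, h, hx.resolve_right ?_, ⟨hyS, hyinf⟩, rfl⟩
    rintro ⟨hxS, hxfin⟩
    have : compOff S y ⊆ compOff S x := fun z hz => ReflTransGen.head ⟨h, hxS, hyS⟩ hz
    exact hyinf (hxfin.subset this)

lemma noBoundary_PiS (S : Set (V d)) : NoBoundary (PiS S) :=
  PiS_eq_edgeBoundary_fillHoles S ▸ noBoundary_edgeBoundary _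

end Boundary

section Ray

variable {d : ℕ}

def box (d : ℕ) (M : ℤ) : Set (V d) := {v | ∀ l, |v l| ≤ M}

lemma finite_box (M : ℤ) : (box d M).Finite := by
  have : box d M = Set.pi Set.univ fun _ => Set.Icc (-M) M := by
    ext v
    simp only [box, Set.mem_pi, Set.mem_univ, true_implies, Set.mem_Icc, abs_le]
    rfl
  exact this ▸ Set.Finite.pi fun _ => Set.finite_Icc _ _

def verts (K : Set (Sym2 (V d))) : Set (V d) := {u | ∃ e ∈ K, u ∈ e}

lemma exists_verts_subset_box {K : Set (Sym2 (V d))} (hK : K.Finite) :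
    ∃ M, verts K ⊆ box d M := by
  classical
  have hV : (verts K).Finite := by
    refine (hK.biUnion fun e _ => e.toFinset.finite_toSet).subset ?_
    rintro u ⟨e, he, hu⟩
    exact Set.mem_biUnion he (Sym2.mem_toFinset.2 hu)
  obtain ⟨M, hM⟩ := (hV.image fun u => ∑ l, |u l|).bddAbove
  exact ⟨M, fun u hu l => (Finset.single_le_sum (fun l _ => abs_nonneg (u l))
    (Finset.mem_univ l)).trans (hM ⟨u, hu, rfl⟩)⟩

def rayEdge (i : Fin d) (v : V d) (k : ℕ) : Sym2 (V d) := s(v + k • uv i, v + (k + 1) • uv i)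

noncomputable def rayParity (K : Set (Sym2 (V d))) (i : Fin d) (v : V d) : ZMod 2 :=
  ∑ᶠ k, K.indicator 1 (rayEdge i v k)

variable {K : Set (Sym2 (V d))} {M : ℤ} {i : Fin d}

lemma notMem_of_mem_notMem_box (hK : verts K ⊆ box d M) {e : Sym2 (V d)} {u : V d}
    (hu : u ∈ e) (hM : u ∉ box d M) : e ∉ K :=
  fun he => hM (hK ⟨e, he, hu⟩)

lemma rayParity_eq_sum (hK : verts K ⊆ box d M) {v : V d} {N : ℕ} (hN : M < v i + N) :
    rayParity K i v = ∑ k ∈ Finset.range N, K.indicator 1 (rayEdge i v k) := by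
  refine finsum_eq_sum_of_support_subset _ fun k hk => ?_
  by_contra hkN
  refine hk (Set.indicator_of_notMem (notMem_of_mem_notMem_box hK (Sym2.mem_mk_left _ _) ?_) _)
  intro hv
  have := abs_le.1 (hv i)
  rw [add_nsmul_uv_apply_self] at this
  rw [Finset.coe_range, Set.mem_Iio, not_lt] at hkN
  omega

lemma rayParity_eq_zero {v : V d} (h : ∀ k, rayEdge i v k ∉ K) : rayParity K i v = 0 :=
  finsum_eq_zero_of_forall_eq_zero fun k => Set.indicator_of_notMem (h k) _

lemma rayParity_eq_add_rayParity_add_uv (hK : verts K ⊆ box d M) (v : V d) :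
    rayParity K i v = K.indicator 1 s(v, v + uv i) + rayParity K i (v + uv i) := by
  have hvi : (v + uv i) i = v i + 1 := by simp
  rw [rayParity_eq_sum hK (N := (M - v i).toNat + 1) (by omega),
    rayParity_eq_sum hK (N := (M - v i).toNat) (by omega), Finset.sum_range_succ', add_comm]
  congr 1
  · simp [rayEdge]
  · refine Finset.sum_congr rfl fun k _ => ?_
    simp only [rayEdge]
    congr 2 <;> simp only [add_nsmul, one_nsmul] <;> abel

lemma rayParity_add_rayParity_add_uv (hK : verts K ⊆ box d M) (hnb : NoBoundary K) {j : Fin d}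
    (hij : i ≠ j) (v : V d) :
    rayParity K i v + rayParity K i (v + uv j) = K.indicator 1 s(v, v + uv j) := by
  -- Sum the parity relations of the squares between the two rays; the rungs telescope.
  set rung : ℕ → ZMod 2 := fun k => K.indicator 1 s(v + k • uv i, v + k • uv i + uv j)
  have hsquare : ∀ k, K.indicator 1 (rayEdge i v k) + K.indicator 1 (rayEdge i (v + uv j) k) =
      rung k + rung (k + 1) := by
    intro k
    have h := noBoundary_iff.1 hnb ⟨v + k • uv i, i, j, hij⟩
    simp only [rayEdge, rung, succ_nsmul] at h ⊢
    abel_nf at h ⊢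
    exact CharTwo.add_eq_zero.1 (by rw [← h]; abel)
  set N := (M - v i).toNat + 1
  have hjv : (v + uv j) i = v i := by simp [hij]
  rw [rayParity_eq_sum hK (N := N) (by omega), rayParity_eq_sum hK (N := N) (by omega),
    ← Finset.sum_add_distrib, Finset.sum_congr rfl fun k _ => hsquare k]
  have htelescope := Finset.sum_range_sub' rung N
  simp only [CharTwo.sub_eq_add] at htelescope
  rw [htelescope]
  have hN : rung N = 0 := by
    refine Set.indicator_of_notMem (notMem_of_mem_notMem_box hK (Sym2.mem_mk_left _ _) ?_) _
    intro hv
    have := abs_le.1 (hv i)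
    rw [add_nsmul_uv_apply_self] at this
    omega
  rw [hN, add_zero]
  simp [rung]

lemma rayParity_add_rayParity_of_latAdj (hK : verts K ⊆ box d M) (hnb : NoBoundary K) {x y : V d}
    (h : latAdj x y) : rayParity K i x + rayParity K i y = K.indicator 1 s(x, y) := by
  have step : ∀ (v : V d) (l : Fin d),
      rayParity K i v + rayParity K i (v + uv l) = K.indicator 1 s(v, v + uv l) := by
    intro v l
    rcases eq_or_ne i l with rfl | hil
    · rw [rayParity_eq_add_rayParity_add_uv hK v, add_assoc, CharTwo.add_self_eq_zero, add_zero]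
    · exact rayParity_add_rayParity_add_uv hK hnb hil v
  obtain ⟨l, rfl | rfl⟩ := latAdj_iff.1 h
  · exact step x l
  · rw [add_comm, Sym2.eq_swap]
    exact step y l

lemma indicator_setOf_eq_one {α : Type*} (f : α → ZMod 2) (a : α) :
    {b | f b = 1}.indicator 1 a = f a := by
  by_cases ha : f a = 1
  · simp [ha]
  · have : ∀ z : ZMod 2, z ≠ 1 → z = 0 := by decide
    simp [this _ ha]

lemma edgeBoundary_setOf_rayParity (hK : verts K ⊆ box d M) (hnb : NoBoundary K)
    (hedge : K ⊆ (latGraph d).edgeSet) : edgeBoundary {v | rayParity K i v = 1} = K := by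
  refine Set.indicator_one_inj (ZMod 2) (funext fun e => ?_)
  induction e using Sym2.ind with
  | _ x y =>
    by_cases h : latAdj x y
    · rw [indicator_edgeBoundary h, indicator_setOf_eq_one, indicator_setOf_eq_one,
        rayParity_add_rayParity_of_latAdj hK hnb h]
    · rw [Set.indicator_of_notMem fun he => h (edgeBoundary_subset_edgeSet _ he),
        Set.indicator_of_notMem fun he => h (hedge he)]

lemma rayParity_eq_zero_of_lt (hK : verts K ⊆ box d M) (hnb : NoBoundary K) {j : Fin d}
    (hij : i ≠ j) {v : V d} (hv : v i < -M) : rayParity K i v = 0 := by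
  have hshift : ∀ R : ℕ, rayParity K i (v + R • uv j) = rayParity K i v := by
    intro R
    induction R with
    | zero => simp
    | succ R ih =>
      rw [← ih, succ_nsmul, ← add_assoc, eq_comm, ← CharTwo.add_eq_zero,
        rayParity_add_rayParity_add_uv hK hnb hij]
      refine Set.indicator_of_notMem (notMem_of_mem_notMem_box hK (Sym2.mem_mk_left _ _)
        fun hw => ?_) _
      have := abs_le.1 (hw i)
      rw [add_nsmul_uv_apply_of_ne _ _ hij] at this
      omega
  rw [← hshift (M - v j + 1).toNat]
  refine rayParity_eq_zero fun k hk => notMem_of_mem_notMem_box hK (Sym2.mem_mk_left _ _)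
    (fun hw => ?_) hk
  have := abs_le.1 (hw j)
  rw [add_nsmul_uv_apply_of_ne _ _ hij.symm, add_nsmul_uv_apply_self] at this
  omega

lemma setOf_rayParity_subset_box (hK : verts K ⊆ box d M) (hnb : NoBoundary K) {j : Fin d}
    (hij : i ≠ j) : {v | rayParity K i v = 1} ⊆ box d M := by
  intro v hv
  obtain ⟨k, hk⟩ : ∃ k, rayEdge i v k ∈ K := by
    by_contra! h
    simp [rayParity_eq_zero h] at hv
  have hlow : -M ≤ v i := by
    by_contra! hvi
    simp [rayParity_eq_zero_of_lt hK hnb hij hvi] at hv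
  have hu := hK ⟨_, hk, Sym2.mem_mk_left _ _⟩
  intro l
  rcases eq_or_ne l i with rfl | hli
  · have := abs_le.1 (hu l)
    rw [add_nsmul_uv_apply_self] at this
    exact abs_le.2 ⟨hlow, by omega⟩
  · simpa only [add_nsmul_uv_apply_of_ne _ _ hli] using hu l

theorem exists_edgeBoundary_eq_of_noBoundary (hd : 2 ≤ d) (hK : verts K ⊆ box d M)
    (hnb : NoBoundary K) (hedge : K ⊆ (latGraph d).edgeSet) :
    ∃ A ⊆ box d M, edgeBoundary A = K :=
  ⟨_, setOf_rayParity_subset_box (i := ⟨0, by omega⟩) (j := ⟨1, hd⟩) hK hnb (by simp),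
    edgeBoundary_setOf_rayParity hK hnb hedge⟩

end Ray

section Plaquettes

variable {d : ℕ}

lemma abs_sub_corner_le_one {F : Square d} {x y : V d} (he : s(x, y) ∈ edgesOf F) (l : Fin d) :
    |x l - F.corner l| ≤ 1 := by
  have huv : 0 ≤ uv F.i l ∧ 0 ≤ uv F.j l ∧ uv F.i l + uv F.j l ≤ 1 := by
    have := F.hij
    simp only [uv_apply]
    split_ifs <;> simp_all
  simp only [edgesOf, Set.mem_insert_iff, Set.mem_singleton_iff, Sym2.eq_iff] at he
  rcases he with (⟨rfl, -⟩ | ⟨rfl, -⟩) | (⟨rfl, -⟩ | ⟨rfl, -⟩) | (⟨rfl, -⟩ | ⟨rfl, -⟩) |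
    ⟨rfl, -⟩ | ⟨rfl, -⟩ <;> simp only [Pi.add_apply, abs_le] <;> omega

lemma finite_setOf_plaqAdj (e : Sym2 (V d)) : {e' | plaqAdj e e'}.Finite := by
  induction e using Sym2.ind with
  | _ x y =>
    have hbox : {c : V d | ∀ l, |x l - c l| ≤ 1}.Finite := by
      refine (Set.Finite.pi (t := fun l => Set.Icc (x l - 1) (x l + 1))
        fun _ => Set.finite_Icc _ _).subset fun c hc l _ => ?_
      have := abs_le.1 (hc l)
      exact ⟨by omega, by omega⟩
    refine (hbox.biUnion fun c _ => Set.finite_iUnion fun i => Set.finite_iUnion fun j =>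
      Set.toFinite ({s(c, c + uv i), s(c, c + uv j), s(c + uv i, c + uv i + uv j),
        s(c + uv j, c + uv i + uv j)} : Set (Sym2 (V d)))).subset ?_
    rintro e' ⟨-, F, he, he'⟩
    exact Set.mem_biUnion (abs_sub_corner_le_one he) (Set.mem_iUnion₂.2 ⟨F.i, F.j, he'⟩)

def plaqComp (P : Set (Sym2 (V d))) (π : Sym2 (V d)) : Set (Sym2 (V d)) :=
  {π' | ReflTransGen (fun a b => plaqAdj a b ∧ a ∈ P ∧ b ∈ P) π π'}

variable {P Q : Set (Sym2 (V d))} {π : Sym2 (V d)}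

lemma mem_plaqComp_self : π ∈ plaqComp P π := ReflTransGen.refl

lemma plaqComp_subset (hπ : π ∈ P) : plaqComp P π ⊆ P := fun _ h => by
  induction h with
  | refl => exact hπ
  | tail _ hab => exact hab.2.2

lemma mem_plaqComp_of_plaqAdj (hπ : π ∈ P) {a b : Sym2 (V d)} (ha : a ∈ plaqComp P π)
    (hab : plaqAdj a b) (hb : b ∈ P) : b ∈ plaqComp P π :=
  ha.tail ⟨hab, plaqComp_subset hπ ha, hb⟩

lemma plaqComp_subset_plaqComp (hπ : π ∈ Q)
    (h : ∀ a ∈ plaqComp Q π, ∀ b ∈ P, plaqAdj a b → b ∈ Q) : plaqComp P π ⊆ plaqComp Q π :=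
  fun _ hc => by
    induction hc with
    | refl => exact mem_plaqComp_self
    | tail _ hab ih => exact mem_plaqComp_of_plaqAdj hπ ih hab.1 (h _ ih _ hab.2.2 hab.1)

lemma noBoundary_plaqComp (hP : NoBoundary P) (hπ : π ∈ P) : NoBoundary (plaqComp P π) := by
  intro F
  rcases (edgesOf F ∩ plaqComp P π).eq_empty_or_nonempty with h | ⟨a, haF, ha⟩
  · simp [h]
  have : edgesOf F ∩ plaqComp P π = edgesOf F ∩ P := by
    refine subset_antisymm (Set.inter_subset_inter_right _ (plaqComp_subset hπ)) ?_
    rintro b ⟨hbF, hb⟩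
    refine ⟨hbF, ?_⟩
    rcases eq_or_ne a b with rfl | hab
    · exact ha
    · exact mem_plaqComp_of_plaqAdj hπ ha ⟨hab, F, haF, hbF⟩ hb
  exact this ▸ hP F

end Plaquettes

lemma Relation.ReflTransGen.mem_iff_mem {α : Type*} {r : α → α → Prop} {A : Set α}
    (hr : ∀ u v, r u v → (u ∈ A ↔ v ∈ A)) {a b : α} (h : ReflTransGen r a b) : a ∈ A ↔ b ∈ A := by
  induction h with
  | refl => rfl
  | tail _ huv ih => exact ih.trans (hr _ _ huv)

section Limit

variable {d : ℕ}

lemma toInfOff_anti {S S' : Set (V d)} (h : S ⊆ S') {y : V d} (hy : toInfOff S' y) :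
    toInfOff S y :=
  ⟨fun hyS => hy.1 (h hyS), hy.2.mono fun _ hz =>
    ReflTransGen.mono (fun _ _ huv => ⟨huv.1, fun hu => huv.2.1 (h hu), fun hv => huv.2.2 (h hv)⟩)
      _ _ hz⟩

lemma mem_PiS_of_subset_of_subset {S S' S'' : Set (V d)} (h : S ⊆ S') (h' : S' ⊆ S'')
    {e : Sym2 (V d)} (he : e ∈ PiS S) (he'' : e ∈ PiS S'') : e ∈ PiS S' := by
  obtain ⟨x, y, hxy, hx, -, rfl⟩ := he
  obtain ⟨x', y', -, -, hy', he⟩ := he''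
  rcases Sym2.eq_iff.1 he with ⟨rfl, rfl⟩ | ⟨rfl, rfl⟩
  · exact ⟨x, y, hxy, h hx, toInfOff_anti h' hy', rfl⟩
  · exact absurd (h' (h hx)) hy'.1

lemma eventually_mem_PiS_iff {W : ℕ → Set (V d)} (hmono : Monotone W) {L : Set (Sym2 (V d))}
    (hL : ∀ π, π ∈ L ↔ ∀ᶠ n in atTop, π ∈ PiS (W n)) (e : Sym2 (V d)) :
    ∀ᶠ n in atTop, (e ∈ PiS (W n) ↔ e ∈ L) := by
  by_cases he : ∃ᶠ n in atTop, e ∈ PiS (W n)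
  · obtain ⟨n₀, hn₀⟩ := he.exists
    have hev : ∀ᶠ n in atTop, e ∈ PiS (W n) := eventually_atTop.2 ⟨n₀, fun n hn => by
      obtain ⟨m, hm, hem⟩ := frequently_atTop.1 he n
      exact mem_PiS_of_subset_of_subset (hmono hn) (hmono hm) hn₀ hem⟩
    exact hev.mono fun n hn => iff_of_true hn ((hL e).2 hev)
  · rw [not_frequently] at he
    refine he.mono fun n hn => iff_of_false hn fun heL => ?_
    obtain ⟨m, hm, hm'⟩ := (((hL e).1 heL).and he).exists
    exact hm' hm

lemma noBoundary_of_eventually_iff {ι : Type*} {l : Filter ι} [l.NeBot]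
    {P : ι → Set (Sym2 (V d))} {L : Set (Sym2 (V d))} (hP : ∀ n, NoBoundary (P n))
    (h : ∀ e, ∀ᶠ n in l, (e ∈ P n ↔ e ∈ L)) : NoBoundary L := by
  intro F
  have hF : (edgesOf F).Finite := by unfold edgesOf; exact Set.toFinite _
  obtain ⟨n, hn⟩ := ((eventually_all_finite hF).2 fun e _ => h e).exists
  have : edgesOf F ∩ L = edgesOf F ∩ P n := by
    ext e
    exact and_congr_right fun he => (hn e he).symm
  exact this ▸ hP n F

lemma subset_of_edgeBoundary_subset_PiS {S A : Set (V d)} (hS : IsLatConnected S) (hA : A.Finite)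
    (hAS : edgeBoundary A ⊆ PiS S) (hne : (edgeBoundary A).Nonempty) : S ⊆ A := by
  obtain ⟨e, he⟩ := hne
  obtain ⟨x, y, hxy, hx, ⟨-, hyinf⟩, rfl⟩ := hAS he
  have hstep : ∀ u v, latAdj u v → (u ∈ S ↔ v ∈ S) → (u ∈ A ↔ v ∈ A) := fun u v huv huvS => by
    have : s(u, v) ∈ edgeBoundary A → s(u, v) ∈ edgeBoundary S :=
      fun h => PiS_subset_edgeBoundary S (hAS h)
    rw [mem_edgeBoundary_iff huv, mem_edgeBoundary_iff huv] at this
    tauto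
  have hyA : y ∉ A := fun hyA => hyinf <| hA.subset fun z hz =>
    (hz.mem_iff_mem fun u v h => hstep u v h.1 (iff_of_false h.2.1 h.2.2)).1 hyA
  have hxA : x ∈ A := ((mem_edgeBoundary_iff hxy).1 he).elim And.left fun h => absurd h.1 hyA
  exact fun w hw => ((hS x hx w hw).mem_iff_mem fun u v h =>
    hstep u v h.1 (iff_of_true h.2.1 h.2.2)).1 hxA

lemma subset_box_of_verts_plaqComp_PiS_subset (hd : 2 ≤ d) {S : Set (V d)} (hS : IsLatConnected S)
    {π : Sym2 (V d)} (hπ : π ∈ PiS S) {M : ℤ} (hM : verts (plaqComp (PiS S) π) ⊆ box d M) :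
    S ⊆ box d M := by
  have hKS : plaqComp (PiS S) π ⊆ PiS S := plaqComp_subset hπ
  obtain ⟨A, hAM, hA⟩ := exists_edgeBoundary_eq_of_noBoundary hd hM
    (noBoundary_plaqComp (noBoundary_PiS S) hπ)
    (hKS.trans ((PiS_subset_edgeBoundary S).trans (edgeBoundary_subset_edgeSet S)))
  exact (subset_of_edgeBoundary_subset_PiS hS ((finite_box M).subset hAM) (hA ▸ hKS)
    (hA ▸ ⟨π, mem_plaqComp_self⟩)).trans hAM

lemma plaqComp_infinite_of_eventually_iff (hd : 2 ≤ d) {W : ℕ → Set (V d)}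
    (hconn : ∀ n, IsLatConnected (W n)) (hcard : Tendsto (fun n => (W n).ncard) atTop atTop)
    {L : Set (Sym2 (V d))} (hL : ∀ e, ∀ᶠ n in atTop, (e ∈ PiS (W n) ↔ e ∈ L))
    {π : Sym2 (V d)} (hπ : π ∈ L) : (plaqComp L π).Infinite := by
  intro hC
  obtain ⟨M, hM⟩ := exists_verts_subset_box hC
  have hN : ((⋃ a ∈ plaqComp L π, {b | plaqAdj a b}) \ L).Finite :=
    (hC.biUnion fun a _ => finite_setOf_plaqAdj a).sdiff
  obtain ⟨n, hCn, hNn, hcardn⟩ := (((eventually_all_finite hC).2 fun e _ => hL e).and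
    (((eventually_all_finite hN).2 fun e _ => hL e).and
      (hcard.eventually_gt_atTop (box d M).ncard))).exists
  have hπn : π ∈ PiS (W n) := (hCn π mem_plaqComp_self).2 hπ
  have hKC : plaqComp (PiS (W n)) π ⊆ plaqComp L π :=
    plaqComp_subset_plaqComp hπ fun a ha b hb hab => by
      by_contra hbL
      exact hbL ((hNn b ⟨Set.mem_biUnion ha hab, hbL⟩).1 hb)
  have hWM : W n ⊆ box d M := subset_box_of_verts_plaqComp_PiS_subset hd (hconn n) hπn
    fun u ⟨e, he, hu⟩ => hM ⟨e, hKC he, hu⟩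
  exact hcardn.not_ge (Set.ncard_le_ncard hWM (finite_box M))

end Limit

theorem PiS_limit_noBoundary_no_finite_component_general (d : ℕ) (hd : 2 ≤ d)
    (W : ℕ → Set (V d))
    (hmono : Monotone W)
    (hconn : ∀ n, IsLatConnected (W n))
    (hcard : Tendsto (fun n => (W n).ncard) atTop atTop)
    (L : Set (Sym2 (V d)))
    (hL : ∀ π : Sym2 (V d), π ∈ L ↔ ∀ᶠ n in atTop, π ∈ PiS (W n)) :
    NoBoundary L ∧
      ∀ π ∈ L,
        {π' | ReflTransGen (fun a b => plaqAdj a b ∧ a ∈ L ∧ b ∈ L) π π'}.Infinite := by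
  have hstable := eventually_mem_PiS_iff hmono hL
  exact ⟨noBoundary_of_eventually_iff (fun n => noBoundary_PiS (W n)) hstable,
    fun π hπ => plaqComp_infinite_of_eventually_iff hd hconn hcard hstable hπ⟩

/-- For an increasing sequence `(W_n)` of finite connected subsets of `ℤ^d`
with `|W_n| → ∞`, the limit `Π_∞` of the plaquette sets `Π(W_n)` (the set of
plaquettes eventually belonging to `Π(W_n)`) has empty boundary and has no
finite connected component in the plaquette adjacency graph. -/
theorem PiS_limit_noBoundary_no_finite_component (d : ℕ) (hd : 2 ≤ d)
    (W : ℕ → Set (V d))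
    (hmono : Monotone W) (hfin : ∀ n, (W n).Finite)
    (hconn : ∀ n, IsLatConnected (W n))
    (hcard : Tendsto (fun n => (W n).ncard) atTop atTop)
    (L : Set (Sym2 (V d)))
    (hL : ∀ π : Sym2 (V d), π ∈ L ↔ ∀ᶠ n in atTop, π ∈ PiS (W n)) :
    NoBoundary L ∧
      ∀ π ∈ L,
        {π' | ReflTransGen (fun a b => plaqAdj a b ∧ a ∈ L ∧ b ∈ L) π π'}.Infinite :=
  PiS_limit_noBoundary_no_finite_component_general d hd W hmono hconn hcard L hL
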